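/- arXiv:1803.08254 — 2 statements merged into one kernel-verified Lean document; each statement's English description precedes it below -/
import Mathlib

section
/- For every t ≥ t₀, the energy satisfies the two-sided decay estimate S/(t(1+L)) ≤ E(t) ≤ S/(t(1−L)), where L = max{ℓ₁,ℓ₂} and S = 2π²κ·Σ_{n≠0} |n c_n|²; in particular E(t) decays at the rate 1/t. -/
/-!
Write `g(s) = ∑ n·c_n e^{inπκs}` and `d = log((1+ℓ₂)/(1-ℓ₂))`, so that `C_n = c_n e^{inπκd}`.
Then `φₓ = iπκ(u + v)` and `φ_t = iπκ(u - v)` with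
`u = g(log(t+x))/(t+x)` and `v = g(log(t-x)+d)/(t-x)`, and the parallelogram law gives
`φₓ² + φ_t² = 2(πκ)²(|u|² + |v|²)`. The substitutions `s = log(t+x)` and `s = log(t-x)+d` turn
`dx/(t±x)²` into `ds/(t±x)`, with weight `1/(t±x)` between `1/(t(1+L))` and `1/(t(1-L))`, and
the two `s`-intervals are adjacent and together have length `log(αβ) = 2/κ`, exactly one period
of `g`. Parseval on that period gives `(2/κ)·∑|n c_n|²`, hence both bounds.
-/

open MeasureTheory
open scoped ComplexConjugate Real

section TrigSeries

open Complex

variable {a : ℤ → ℂ} {ω : ℝ}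

noncomputable def trigSeries (a : ℤ → ℂ) (ω s : ℝ) : ℂ :=
  ∑' n : ℤ, a n * exp (I * n * ω * s)

lemma norm_exp_I_mul_intCast_mul (n : ℤ) (ω s : ℝ) : ‖exp (I * n * ω * s)‖ = 1 := by
  simp [norm_exp]

lemma hasSum_trigSeries (ha : Summable fun n => ‖a n‖) (ω s : ℝ) :
    HasSum (fun n : ℤ => a n * exp (I * n * ω * s)) (trigSeries a ω s) :=
  (ha.of_norm_bounded fun n => by simp [norm_exp_I_mul_intCast_mul]).hasSum

lemma continuous_trigSeries (ha : Summable fun n => ‖a n‖) (ω : ℝ) :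
    Continuous (trigSeries a ω) :=
  continuous_tsum (fun n => by fun_prop) ha fun n s => by simp [norm_exp_I_mul_intCast_mul]

lemma hasSum_integral_trigSeries_mul (ha : Summable fun n => ‖a n‖) (ω : ℝ) {h : ℝ → ℂ}
    (hh : Continuous h) (r b : ℝ) :
    HasSum (fun n => a n * ∫ s in r..b, exp (I * n * ω * s) * h s)
      (∫ s in r..b, trigSeries a ω s * h s) := by
  simp_rw [← intervalIntegral.integral_const_mul, ← mul_assoc]
  refine intervalIntegral.hasSum_integral_of_dominated_convergence (fun n s => ‖a n‖ * ‖h s‖)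
    (fun n => by fun_prop) (fun n => .of_forall fun s _ => by simp [norm_exp_I_mul_intCast_mul])
    (.of_forall fun s _ => ha.mul_right _) ?_
    (.of_forall fun s _ => (hasSum_trigSeries ha ω s).mul_right (h s))
  simp_rw [tsum_mul_right]
  exact (continuous_const.mul hh.norm).intervalIntegrable _ _

lemma integral_exp_I_mul_period (hω : 0 < ω) (r : ℝ) (k : ℤ) :
    ∫ s in r..r + 2 * π / ω, exp (I * k * ω * s)
      = if k = 0 then ((2 * π / ω : ℝ) : ℂ) else 0 := by
  rcases eq_or_ne k 0 with rfl | hk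
  · simp
  have hω' : (ω : ℂ) ≠ 0 := by exact_mod_cast hω.ne'
  have hk' : (k : ℂ) ≠ 0 := by exact_mod_cast hk
  have hperiod : (I * k * ω) * (2 * π / ω : ℂ) = k * (2 * π * I) := by field_simp
  rw [if_neg hk, integral_exp_mul_complex (by simp [hω', hk']), div_eq_zero_iff, sub_eq_zero]
  left
  push_cast
  rw [mul_add, exp_add, hperiod, exp_int_mul_two_pi_mul_I, mul_one]

lemma integral_trigSeries_mul_conj_exp (ha : Summable fun n => ‖a n‖) (hω : 0 < ω) (r : ℝ)
    (m : ℤ) :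
    ∫ s in r..r + 2 * π / ω, trigSeries a ω s * conj (exp (I * m * ω * s))
      = ((2 * π / ω : ℝ) : ℂ) * a m := by
  have hprod : ∀ (n : ℤ) (s : ℝ),
      exp (I * n * ω * s) * conj (exp (I * m * ω * s)) = exp (I * (n - m : ℤ) * ω * s) := by
    intro n s
    rw [← exp_conj, ← exp_add]
    congr 1
    simp only [map_mul, conj_I, map_intCast, conj_ofReal]
    push_cast
    ring
  have hsum := hasSum_integral_trigSeries_mul ha ω (h := fun s => conj (exp (I * m * ω * s)))
    (continuous_conj.comp (by fun_prop)) r (r + 2 * π / ω)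
  simp only [hprod, integral_exp_I_mul_period hω, sub_eq_zero] at hsum
  have hm : HasSum (fun n => a n * if n = m then ((2 * π / ω : ℝ) : ℂ) else 0)
      (a m * ((2 * π / ω : ℝ) : ℂ)) := by
    convert hasSum_ite_eq m (a m * ((2 * π / ω : ℝ) : ℂ)) using 2 with n
    split_ifs with h <;> simp [h]
  rw [hsum.unique hm, mul_comm]

theorem integral_norm_sq_trigSeries (ha : Summable fun n => ‖a n‖) (hω : 0 < ω) (r : ℝ) :
    ∫ s in r..r + 2 * π / ω, ‖trigSeries a ω s‖ ^ 2 = 2 * π / ω * ∑' n, ‖a n‖ ^ 2 := by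
  have hsum := hasSum_integral_trigSeries_mul ha ω (h := fun s => conj (trigSeries a ω s))
    (continuous_conj.comp (continuous_trigSeries ha ω)) r (r + 2 * π / ω)
  have hcoeff : ∀ n : ℤ, ∫ s in r..r + 2 * π / ω, exp (I * n * ω * s) * conj (trigSeries a ω s)
      = conj (((2 * π / ω : ℝ) : ℂ) * a n) := by
    intro n
    rw [← integral_trigSeries_mul_conj_exp ha hω r n, ← intervalIntegral.intervalIntegral_conj]
    simp_rw [map_mul, conj_conj, mul_comm]
  have hterm : ∀ n : ℤ, a n * conj (((2 * π / ω : ℝ) : ℂ) * a n)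
      = ((2 * π / ω * ‖a n‖ ^ 2 : ℝ) : ℂ) := by
    intro n
    rw [map_mul, conj_ofReal, mul_left_comm, mul_conj, normSq_eq_norm_sq]
    push_cast
    ring
  have hnormSq : ∀ s, ((‖trigSeries a ω s‖ ^ 2 : ℝ) : ℂ)
      = trigSeries a ω s * conj (trigSeries a ω s) := fun s => by
    rw [mul_conj, normSq_eq_norm_sq]
  simp only [hcoeff, hterm] at hsum
  apply ofReal_injective
  rw [← intervalIntegral.integral_ofReal]
  simp only [hnormSq]
  rw [← hsum.tsum_eq, ← ofReal_tsum, tsum_mul_left]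

end TrigSeries

section DAlembert

open Complex

variable {c C : ℤ → ℂ} {ω d : ℝ}

lemma sq_add_sq_of_eq_I_mul {w₁ w₂ r : ℝ} {u v : ℂ} (h₁ : (w₁ : ℂ) = I * r * (u + v))
    (h₂ : (w₂ : ℂ) = I * r * (u - v)) :
    w₁ ^ 2 + w₂ ^ 2 = 2 * r ^ 2 * (‖u‖ ^ 2 + ‖v‖ ^ 2) := by
  have hsq : ∀ (w : ℝ) (z : ℂ), (w : ℂ) = I * r * z → w ^ 2 = r ^ 2 * ‖z‖ ^ 2 := by
    intro w z h
    rw [← sq_abs, ← Real.norm_eq_abs, ← norm_real, h, norm_mul, norm_mul, norm_I, one_mul,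
      norm_real, Real.norm_eq_abs, mul_pow, sq_abs]
  rw [hsq _ _ h₁, hsq _ _ h₂, ← mul_add, parallelogram_law_with_norm ℝ u v]
  ring

lemma intCast_mul_shift_exp (hC : ∀ n : ℤ, C n = c n * exp (I * n * ω * d)) (n : ℤ) (s : ℝ) :
    (n : ℂ) * (C n * exp (I * n * ω * s)) = n * c n * exp (I * n * ω * (s + d : ℝ)) := by
  rw [hC, mul_assoc (c n), ← exp_add]
  push_cast
  ring_nf

lemma energy_density_eq_trigSeries (hc : Summable fun n : ℤ => ‖(n : ℂ) * c n‖)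
    (hC : ∀ n : ℤ, C n = c n * exp (I * n * ω * d)) {w₁ w₂ s₁ s₂ y₁ y₂ : ℝ}
    (h₁ : (w₁ : ℂ) = I * ω * ∑' n : ℤ, (n : ℂ) *
      (c n * exp (I * n * ω * s₁) / y₁ + C n * exp (I * n * ω * s₂) / y₂))
    (h₂ : (w₂ : ℂ) = I * ω * ∑' n : ℤ, (n : ℂ) *
      (c n * exp (I * n * ω * s₁) / y₁ - C n * exp (I * n * ω * s₂) / y₂)) :
    w₁ ^ 2 + w₂ ^ 2 = 2 * ω ^ 2 * (‖trigSeries (fun n => n * c n) ω s₁‖ ^ 2 / y₁ ^ 2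
      + ‖trigSeries (fun n => n * c n) ω (s₂ + d)‖ ^ 2 / y₂ ^ 2) := by
  have hsum₁ := (hasSum_trigSeries hc ω s₁).div_const (y₁ : ℂ)
  have hsum₂ := (hasSum_trigSeries hc ω (s₂ + d)).div_const (y₂ : ℂ)
  simp only [mul_add, mul_sub, ← mul_div_assoc, intCast_mul_shift_exp hC] at h₁ h₂
  simp only [← mul_assoc] at h₁ h₂
  rw [(hsum₁.add hsum₂).tsum_eq] at h₁
  rw [(hsum₁.sub hsum₂).tsum_eq] at h₂
  rw [sq_add_sq_of_eq_I_mul h₁ h₂]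
  simp only [norm_div, norm_real, Real.norm_eq_abs, div_pow, sq_abs]

end DAlembert

section LogWindow

open Real Set intervalIntegral

lemma integral_comp_log_div_sq {F : ℝ → ℝ} (hF : Continuous F) {p q : ℝ} (hp : 0 < p)
    (hq : 0 < q) :
    ∫ u in p..q, F (log u) / u ^ 2 = ∫ s in log p..log q, F s * exp (-s) := by
  have hsubst := integral_comp_mul_deriv' (a := log p) (b := log q) (f := exp) (f' := exp)
    (g := fun u => F (log u) / u ^ 2) (fun s _ => hasDerivAt_exp s) continuous_exp.continuousOn
    (by
      rintro _ ⟨s, -, rfl⟩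
      exact ContinuousAt.continuousWithinAt (by fun_prop (disch := positivity)))
  rw [exp_log hp, exp_log hq] at hsubst
  rw [← hsubst]
  refine integral_congr fun s _ => ?_
  simp only [Function.comp, log_exp, exp_neg]
  field_simp

lemma integral_comp_log_div_sq_mem_Icc {F : ℝ → ℝ} (hF : Continuous F) (hF0 : ∀ s, 0 ≤ F s)
    {p a b q : ℝ} (hp : 0 < p) (hpa : p ≤ a) (hab : a ≤ b) (hbq : b ≤ q) :
    ∫ u in a..b, F (log u) / u ^ 2
      ∈ Icc ((∫ s in log a..log b, F s) / q) ((∫ s in log a..log b, F s) / p) := by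
  have ha : 0 < a := hp.trans_le hpa
  have hlog : log a ≤ log b := log_le_log ha hab
  rw [integral_comp_log_div_sq hF ha (ha.trans_le hab), ← intervalIntegral.integral_div,
    ← intervalIntegral.integral_div]
  have hint : ∀ c : ℝ, IntervalIntegrable (fun s => F s / c) volume (log a) (log b) :=
    fun c => (hF.div_const c).intervalIntegrable _ _
  have hweight : IntervalIntegrable (fun s => F s * exp (-s)) volume (log a) (log b) :=
    (hF.mul (continuous_exp.comp continuous_neg)).intervalIntegrable _ _
  constructor
  · refine integral_mono_on hlog (hint _) hweight fun s hs => ?_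
    have : exp s ≤ q := (exp_le_exp.mpr hs.2).trans ((exp_log (ha.trans_le hab)).le.trans hbq)
    rw [exp_neg, ← div_eq_mul_inv]
    gcongr
    exact hF0 s
  · refine integral_mono_on hlog hweight (hint _) fun s hs => ?_
    have : p ≤ exp s := hpa.trans ((exp_log ha).symm.le.trans (exp_le_exp.mpr hs.1))
    rw [exp_neg, ← div_eq_mul_inv]
    gcongr
    exact hF0 s

lemma integral_log_window_add_shift {F : ℝ → ℝ} (hF : Continuous F) {ℓ₁ ℓ₂ t : ℝ}
    (hℓ₁ : |ℓ₁| < 1) (hℓ₂ : |ℓ₂| < 1) (ht : 0 < t) :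
    (∫ s in log ((1 - ℓ₁) * t)..log ((1 + ℓ₂) * t), F s)
      + ∫ s in log ((1 - ℓ₂) * t)..log ((1 + ℓ₁) * t), F (s + log ((1 + ℓ₂) / (1 - ℓ₂)))
      = ∫ s in log ((1 - ℓ₁) * t)..log ((1 - ℓ₁) * t)
          + log ((1 + ℓ₁) / (1 - ℓ₂) * ((1 + ℓ₂) / (1 - ℓ₁))), F s := by
  have hp₁ : 0 < 1 + ℓ₁ := by linarith [abs_lt.mp hℓ₁]
  have hm₁ : 0 < 1 - ℓ₁ := by linarith [abs_lt.mp hℓ₁]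
  have hp₂ : 0 < 1 + ℓ₂ := by linarith [abs_lt.mp hℓ₂]
  have hm₂ : 0 < 1 - ℓ₂ := by linarith [abs_lt.mp hℓ₂]
  have hstart : log ((1 - ℓ₂) * t) + log ((1 + ℓ₂) / (1 - ℓ₂)) = log ((1 + ℓ₂) * t) := by
    rw [← log_mul (mul_pos hm₂ ht).ne' (div_pos hp₂ hm₂).ne']
    congr 1
    field_simp
  have hend : log ((1 + ℓ₁) * t) + log ((1 + ℓ₂) / (1 - ℓ₂))
      = log ((1 - ℓ₁) * t) + log ((1 + ℓ₁) / (1 - ℓ₂) * ((1 + ℓ₂) / (1 - ℓ₁))) := by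
    rw [← log_mul (mul_pos hp₁ ht).ne' (div_pos hp₂ hm₂).ne',
      ← log_mul (mul_pos hm₁ ht).ne' (mul_pos (div_pos hp₁ hm₂) (div_pos hp₂ hm₁)).ne']
    congr 1
    field_simp
  rw [integral_comp_add_right F, hstart, hend,
    integral_add_adjacent_intervals (hF.intervalIntegrable _ _) (hF.intervalIntegrable _ _)]

lemma integral_window_mem_Icc {F : ℝ → ℝ} (hF : Continuous F) (hF0 : ∀ s, 0 ≤ F s)
    {ℓ₁ ℓ₂ L t : ℝ} (hℓ : 0 ≤ ℓ₁ + ℓ₂) (hℓ₁L : ℓ₁ ≤ L) (hℓ₂L : ℓ₂ ≤ L) (hL : L < 1)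
    (ht : 0 < t) :
    ∫ x in -ℓ₁ * t..ℓ₂ * t, (F (log (t + x)) / (t + x) ^ 2
        + F (log (t - x) + log ((1 + ℓ₂) / (1 - ℓ₂))) / (t - x) ^ 2)
      ∈ Icc ((∫ s in log ((1 - ℓ₁) * t)..log ((1 - ℓ₁) * t)
          + log ((1 + ℓ₁) / (1 - ℓ₂) * ((1 + ℓ₂) / (1 - ℓ₁))), F s) / (t * (1 + L)))
        ((∫ s in log ((1 - ℓ₁) * t)..log ((1 - ℓ₁) * t)
          + log ((1 + ℓ₁) / (1 - ℓ₂) * ((1 + ℓ₂) / (1 - ℓ₁))), F s) / (t * (1 - L))) := by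
  set d := log ((1 + ℓ₂) / (1 - ℓ₂))
  have hpos : ∀ x ∈ uIcc (-ℓ₁ * t) (ℓ₂ * t), 0 < t + x ∧ 0 < t - x := by
    intro x hx
    rw [uIcc_of_le (by nlinarith)] at hx
    constructor <;> nlinarith [hx.1, hx.2]
  have hsplit : ∫ x in -ℓ₁ * t..ℓ₂ * t, (F (log (t + x)) / (t + x) ^ 2
        + F (log (t - x) + d) / (t - x) ^ 2)
      = (∫ u in (1 - ℓ₁) * t..(1 + ℓ₂) * t, F (log u) / u ^ 2)
        + ∫ u in (1 - ℓ₂) * t..(1 + ℓ₁) * t, F (log u + d) / u ^ 2 := by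
    rw [intervalIntegral.integral_add, integral_comp_add_left (fun u => F (log u) / u ^ 2),
      integral_comp_sub_left (fun u => F (log u + d) / u ^ 2)]
    · congr 2 <;> ring
    · exact ContinuousOn.intervalIntegrable fun x hx => ContinuousAt.continuousWithinAt
        (by have := (hpos x hx).1; fun_prop (disch := positivity))
    · exact ContinuousOn.intervalIntegrable fun x hx => ContinuousAt.continuousWithinAt
        (by have := (hpos x hx).2; fun_prop (disch := positivity))
  have hA := integral_comp_log_div_sq_mem_Icc hF hF0 (p := t * (1 - L)) (a := (1 - ℓ₁) * t)
    (b := (1 + ℓ₂) * t) (q := t * (1 + L)) (by nlinarith) (by nlinarith) (by nlinarith)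
    (by nlinarith)
  have hB := integral_comp_log_div_sq_mem_Icc (F := fun s => F (s + d)) (by fun_prop)
    (fun s => hF0 _) (p := t * (1 - L)) (a := (1 - ℓ₂) * t) (b := (1 + ℓ₁) * t)
    (q := t * (1 + L)) (by nlinarith) (by nlinarith) (by nlinarith) (by nlinarith)
  rw [hsplit, ← integral_log_window_add_shift hF (abs_lt.mpr ⟨by linarith, by linarith⟩)
    (abs_lt.mpr ⟨by linarith, by linarith⟩) ht]
  exact ⟨(add_div _ _ _).trans_le (add_le_add hA.1 hB.1),
    (add_le_add hA.2 hB.2).trans_eq (add_div _ _ _).symm⟩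

lemma one_lt_div_mul_div {ℓ₁ ℓ₂ : ℝ} (hℓ₁ : ℓ₁ < 1) (hℓ₂ : ℓ₂ < 1) (hℓ : 0 < ℓ₁ + ℓ₂) :
    1 < (1 + ℓ₁) / (1 - ℓ₂) * ((1 + ℓ₂) / (1 - ℓ₁)) := by
  rw [div_mul_div_comm, one_lt_div (by nlinarith)]
  nlinarith

end LogWindow

theorem energy_decay_estimate_general
    (ℓ₁ ℓ₂ L₀ t₀ α β κ : ℝ)
    (hℓ₁' : ℓ₁ < 1) (hℓ₂' : ℓ₂ < 1)
    (hℓ : 0 < ℓ₁ + ℓ₂) (hL₀ : 0 < L₀) (ht₀ : t₀ = L₀ / (ℓ₁ + ℓ₂))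
    (hα : α = (1 + ℓ₁) / (1 - ℓ₂)) (hβ : β = (1 + ℓ₂) / (1 - ℓ₁))
    (hκ : κ = 2 / Real.log (α * β))
    (L : ℝ) (hL : L = max ℓ₁ ℓ₂)
    (c : ℤ → ℂ)
    (hcsum : Summable fun n : ℤ => ‖(n : ℂ) * c n‖)
    (C : ℤ → ℂ)
    (hC : ∀ n : ℤ, C n = c n *
      Complex.exp (Complex.I * n * Real.pi * κ * Real.log ((1 + ℓ₂) / (1 - ℓ₂))))
    (Φx : ℝ → ℝ → ℝ)
    (hΦx : ∀ t : ℝ, t₀ ≤ t → ∀ x : ℝ, -ℓ₁ * t ≤ x → x ≤ ℓ₂ * t →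
      (Φx x t : ℂ) = Complex.I * Real.pi * κ * ∑' n : ℤ, (n : ℂ) *
        (c n * Complex.exp (Complex.I * n * Real.pi * κ * Real.log (t + x)) /
            ((t + x : ℝ) : ℂ) +
         C n * Complex.exp (Complex.I * n * Real.pi * κ * Real.log (t - x)) /
            ((t - x : ℝ) : ℂ)))
    (Φt : ℝ → ℝ → ℝ)
    (hΦt : ∀ t : ℝ, t₀ ≤ t → ∀ x : ℝ, -ℓ₁ * t ≤ x → x ≤ ℓ₂ * t →
      (Φt x t : ℂ) = Complex.I * Real.pi * κ * ∑' n : ℤ, (n : ℂ) *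
        (c n * Complex.exp (Complex.I * n * Real.pi * κ * Real.log (t + x)) /
            ((t + x : ℝ) : ℂ) -
         C n * Complex.exp (Complex.I * n * Real.pi * κ * Real.log (t - x)) /
            ((t - x : ℝ) : ℂ)))
    (E : ℝ → ℝ)
    (hE : ∀ t : ℝ, E t = (1 / 2) * ∫ x in Set.Ioo (-ℓ₁ * t) (ℓ₂ * t),
      ((Φx x t) ^ 2 + (Φt x t) ^ 2))
    (S : ℝ) (hS : S = 2 * Real.pi ^ 2 * κ * ∑' n : ℤ, ‖(n : ℂ) * c n‖ ^ 2)
    :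
    ∀ t : ℝ, t₀ ≤ t →
      S / (t * (1 + L)) ≤ E t ∧ E t ≤ S / (t * (1 - L)) := by
  intro t ht
  obtain ⟨hℓ₁L, hℓ₂L⟩ : ℓ₁ ≤ L ∧ ℓ₂ ≤ L := hL ▸ ⟨le_max_left _ _, le_max_right _ _⟩
  have htpos : 0 < t := (show 0 < t₀ by rw [ht₀]; positivity).trans_le ht
  have hαβ : 0 < Real.log (α * β) := Real.log_pos (hα ▸ hβ ▸ one_lt_div_mul_div hℓ₁' hℓ₂' hℓ)
  set ω := Real.pi * κ with hω_def
  have hω : 0 < ω := mul_pos Real.pi_pos (hκ ▸ by positivity)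
  have hfreq : ∀ (n : ℤ) (s : ℝ), Complex.I * n * Real.pi * κ * s = Complex.I * n * ω * s :=
    fun n s => by rw [hω_def]; push_cast; ring
  have hamp : Complex.I * Real.pi * κ = Complex.I * ω := by rw [hω_def]; push_cast; ring
  set g := trigSeries (fun n => n * c n) ω
  set d := Real.log ((1 + ℓ₂) / (1 - ℓ₂))
  have hdensity : ∀ x ∈ Set.Ioo (-ℓ₁ * t) (ℓ₂ * t), Φx x t ^ 2 + Φt x t ^ 2
      = 2 * ω ^ 2 * (‖g (Real.log (t + x))‖ ^ 2 / (t + x) ^ 2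
        + ‖g (Real.log (t - x) + d)‖ ^ 2 / (t - x) ^ 2) := fun x hx =>
    energy_density_eq_trigSeries hcsum (fun n => (hC n).trans (by rw [hfreq]))
      (by rw [hΦx t ht x hx.1.le hx.2.le, hamp]; simp only [hfreq])
      (by rw [hΦt t ht x hx.1.le hx.2.le, hamp]; simp only [hfreq])
  set W := ∫ x in -ℓ₁ * t..ℓ₂ * t, (‖g (Real.log (t + x))‖ ^ 2 / (t + x) ^ 2
    + ‖g (Real.log (t - x) + d)‖ ^ 2 / (t - x) ^ 2)
  have hE' : E t = ω ^ 2 * W := by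
    rw [hE, setIntegral_congr_fun measurableSet_Ioo hdensity, ← integral_Ioc_eq_integral_Ioo,
      ← intervalIntegral.integral_of_le (by nlinarith), intervalIntegral.integral_const_mul]
    ring
  have hbounds := integral_window_mem_Icc (F := fun s => ‖g s‖ ^ 2)
    ((continuous_trigSeries hcsum ω).norm.pow 2) (fun s => by positivity) hℓ.le hℓ₁L hℓ₂L
    (hL ▸ max_lt hℓ₁' hℓ₂') htpos
  have hperiod : 2 * Real.pi / ω = Real.log (α * β) := by rw [hω_def, hκ]; field_simp
  rw [← hα, ← hβ, ← hperiod, integral_norm_sq_trigSeries hcsum hω] at hbounds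
  have hS' : S = ω ^ 2 * (2 * Real.pi / ω * ∑' n : ℤ, ‖(n : ℂ) * c n‖ ^ 2) := by
    rw [hS, hω_def]; field_simp
  rw [hE', hS', mul_div_assoc (ω ^ 2), mul_div_assoc (ω ^ 2)]
  exact ⟨by gcongr; exact hbounds.1, by gcongr; exact hbounds.2⟩

/-- two-sided energy decay estimate
`S/(t(1+L)) ≤ E(t) ≤ S/(t(1−L))` for `t ≥ t₀`. -/
theorem energy_decay_estimate
    (ℓ₁ ℓ₂ L₀ t₀ α β κ : ℝ)
    (hℓ₁ : 0 ≤ ℓ₁) (hℓ₁' : ℓ₁ < 1) (hℓ₂ : 0 ≤ ℓ₂) (hℓ₂' : ℓ₂ < 1)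
    (hℓ : 0 < ℓ₁ + ℓ₂) (hL₀ : 0 < L₀) (ht₀ : t₀ = L₀ / (ℓ₁ + ℓ₂))
    (hα : α = (1 + ℓ₁) / (1 - ℓ₂)) (hβ : β = (1 + ℓ₂) / (1 - ℓ₁))
    (hκ : κ = 2 / Real.log (α * β))
    (L : ℝ) (hL : L = max ℓ₁ ℓ₂)
    (c : ℤ → ℂ) (hc0 : c 0 = 0)
    (hcsum : Summable fun n : ℤ => ‖(n : ℂ) * c n‖)
    (hconj : ∀ n : ℤ, c (-n) = (starRingEnd ℂ) (c n))
    (C : ℤ → ℂ)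
    (hC : ∀ n : ℤ, C n = c n *
      Complex.exp (Complex.I * n * Real.pi * κ * Real.log ((1 + ℓ₂) / (1 - ℓ₂))))
    (Φx : ℝ → ℝ → ℝ)
    (hΦx : ∀ t : ℝ, t₀ ≤ t → ∀ x : ℝ, -ℓ₁ * t ≤ x → x ≤ ℓ₂ * t →
      (Φx x t : ℂ) = Complex.I * Real.pi * κ * ∑' n : ℤ, (n : ℂ) *
        (c n * Complex.exp (Complex.I * n * Real.pi * κ * Real.log (t + x)) /
            ((t + x : ℝ) : ℂ) +
         C n * Complex.exp (Complex.I * n * Real.pi * κ * Real.log (t - x)) /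
            ((t - x : ℝ) : ℂ)))
    (Φt : ℝ → ℝ → ℝ)
    (hΦt : ∀ t : ℝ, t₀ ≤ t → ∀ x : ℝ, -ℓ₁ * t ≤ x → x ≤ ℓ₂ * t →
      (Φt x t : ℂ) = Complex.I * Real.pi * κ * ∑' n : ℤ, (n : ℂ) *
        (c n * Complex.exp (Complex.I * n * Real.pi * κ * Real.log (t + x)) /
            ((t + x : ℝ) : ℂ) -
         C n * Complex.exp (Complex.I * n * Real.pi * κ * Real.log (t - x)) /
            ((t - x : ℝ) : ℂ)))
    (E : ℝ → ℝ)
    (hE : ∀ t : ℝ, E t = (1 / 2) * ∫ x in Set.Ioo (-ℓ₁ * t) (ℓ₂ * t),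
      ((Φx x t) ^ 2 + (Φt x t) ^ 2))
    (S : ℝ) (hS : S = 2 * Real.pi ^ 2 * κ * ∑' n : ℤ, ‖(n : ℂ) * c n‖ ^ 2)
    :
    ∀ t : ℝ, t₀ ≤ t →
      S / (t * (1 + L)) ≤ E t ∧ E t ≤ S / (t * (1 - L)) :=
  energy_decay_estimate_general ℓ₁ ℓ₂ L₀ t₀ α β κ hℓ₁' hℓ₂' hℓ hL₀ ht₀ hα hβ hκ L hL c hcsum C hC Φx
    hΦx Φt hΦt E hE S hS
end

section
/- Observability at both endpoints in the sharp time: if T ≥ T̃_ℓ where T̃_ℓ = (max{α,β} − 1)·t₀ = max{ L₀/(1−ℓ₁), L₀/(1−ℓ₂) }, then E(t₀) ≤ ((1−l²)²·max{α,β}/(4(1−L)))·∫_{t₀}^{t₀+T} ( φₓ(−ℓ₁t, t)² + φₓ(ℓ₂t, t)² ) dt, where l = min{ℓ₁,ℓ₂} and L = max{ℓ₁,ℓ₂}. -/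
/-!
The series collapse to d'Alembert form: with `b = (1+ℓ₂)/(1−ℓ₂)` and the real profile
`a(u) = iπκ·Σ n c_n u^{iπκn} / u`, one has `φₓ = a(t+x) + b·a(b(t−x))` and
`φ_t = a(t+x) − b·a(b(t−x))`, and `a(αβ·u) = a(u)/(αβ)` because `κ·log(αβ) = 2`.
Hence `E(t₀) = ∫_{(1−ℓ₁)t₀}^{(1+ℓ₂)t₀} a² + b·∫_{(1+ℓ₂)t₀}^{α(1+ℓ₂)t₀} a²`, while the scaling
law turns the two boundary traces into `2a((1−ℓ₁)t)/(1+ℓ₁)` and `2a((1+ℓ₂)t)/(1−ℓ₂)`. After the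
substitutions `u = (1−ℓ₁)t` and `u = (1+ℓ₂)t` the observation integrals cover both energy
intervals, `(1+ℓ₂)t₀ = β(1−ℓ₁)t₀` and `α(1+ℓ₂)t₀`, once `t₀ + T ≥ max{α,β}·t₀`; comparing the
weights of the two sides gives the constant.
-/

open MeasureTheory Set

noncomputable section

section LogSeries

open Complex ComplexConjugate

variable (κ : ℝ)

def logMode (n : ℤ) (u : ℝ) : ℂ := exp (I * n * Real.pi * κ * Real.log u)

lemma norm_logMode (n : ℤ) (u : ℝ) : ‖logMode κ n u‖ = 1 := by
  rw [logMode, show I * n * Real.pi * κ * Real.log u =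
    ((n * Real.pi * κ * Real.log u : ℝ) : ℂ) * I by push_cast; ring]
  exact norm_exp_ofReal_mul_I _

lemma logMode_mul (n : ℤ) {u v : ℝ} (hu : u ≠ 0) (hv : v ≠ 0) :
    logMode κ n (u * v) = logMode κ n u * logMode κ n v := by
  rw [logMode, logMode, logMode, Real.log_mul hu hv, ← exp_add]
  congr 1
  push_cast
  ring

lemma logMode_eq_one {ρ : ℝ} (h : κ * Real.log ρ = 2) (n : ℤ) : logMode κ n ρ = 1 := by
  rw [logMode, ← exp_int_mul_two_pi_mul_I n]
  congr 1
  have h' : (κ : ℂ) * Real.log ρ = 2 := by exact_mod_cast h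
  linear_combination (I * n * Real.pi) * h'

lemma conj_logMode (n : ℤ) (u : ℝ) : conj (logMode κ n u) = logMode κ (-n) u := by
  rw [logMode, logMode, ← exp_conj]
  simp only [map_mul, conj_I, conj_ofReal, map_intCast]
  congr 1
  push_cast
  ring

variable (c : ℤ → ℂ)

def logSeries (u : ℝ) : ℂ := ∑' n : ℤ, n * c n * logMode κ n u

variable {c}

lemma summable_logSeries (hc : Summable fun n : ℤ => ‖(n : ℂ) * c n‖) (u : ℝ) :
    Summable fun n : ℤ => (n : ℂ) * c n * logMode κ n u :=
  .of_norm <| by simpa only [norm_mul, norm_logMode, mul_one] using hc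

lemma continuousOn_logSeries (hc : Summable fun n : ℤ => ‖(n : ℂ) * c n‖) :
    ContinuousOn (logSeries κ c) {0}ᶜ := by
  refine continuousOn_tsum (fun n => ?_) hc fun n u _ => by
    rw [norm_mul, norm_logMode, mul_one]
  exact continuousOn_const.mul (continuous_exp.comp_continuousOn
    (continuousOn_const.mul (continuous_ofReal.comp_continuousOn Real.continuousOn_log)))

lemma logSeries_mul_of_mul_log_eq_two {ρ : ℝ} (h : κ * Real.log ρ = 2) (u : ℝ) :
    logSeries κ c (ρ * u) = logSeries κ c u := by
  have hρ : ρ ≠ 0 := by rintro rfl; simp at h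
  rcases eq_or_ne u 0 with rfl | hu
  · rw [mul_zero]
  simp only [logSeries, logMode_mul κ _ hρ hu, logMode_eq_one κ h, one_mul]

lemma conj_logSeries (hconj : ∀ n, c (-n) = conj (c n)) (u : ℝ) :
    conj (logSeries κ c u) = -logSeries κ c u := by
  rw [logSeries, starRingEnd_apply, tsum_star, ← (Equiv.neg ℤ).tsum_eq, ← tsum_neg]
  refine tsum_congr fun n => ?_
  rw [Equiv.neg_apply, ← starRingEnd_apply, map_mul, map_mul, conj_logMode, hconj, conj_conj,
    neg_neg, map_intCast]
  push_cast
  ring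

variable (c) in
def waveProfile (u : ℝ) : ℝ := (I * Real.pi * κ * logSeries κ c u / u).re

lemma ofReal_waveProfile (hconj : ∀ n, c (-n) = conj (c n)) (u : ℝ) :
    (waveProfile κ c u : ℂ) = I * Real.pi * κ * logSeries κ c u / u := by
  refine conj_eq_iff_re.mp ?_
  rw [map_div₀, map_mul, map_mul, map_mul, conj_I, conj_ofReal, conj_ofReal, conj_ofReal,
    conj_logSeries κ hconj]
  ring

lemma continuousOn_waveProfile (hc : Summable fun n : ℤ => ‖(n : ℂ) * c n‖) :
    ContinuousOn (waveProfile κ c) {0}ᶜ :=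
  continuous_re.comp_continuousOn <| (continuousOn_const.mul (continuousOn_logSeries κ hc)).div
    continuous_ofReal.continuousOn fun _ hu => ofReal_ne_zero.mpr hu

lemma waveProfile_mul_of_mul_log_eq_two {ρ : ℝ} (h : κ * Real.log ρ = 2) (u : ℝ) :
    waveProfile κ c (ρ * u) = waveProfile κ c u / ρ := by
  rw [waveProfile, waveProfile, logSeries_mul_of_mul_log_eq_two κ h, ofReal_mul, mul_comm (ρ : ℂ),
    ← div_div, div_ofReal_re]

lemma hasSum_logMode_div (hc : Summable fun n : ℤ => ‖(n : ℂ) * c n‖) (u : ℝ) :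
    HasSum (fun n : ℤ => n * (c n * logMode κ n u / u)) (logSeries κ c u / u) := by
  unfold logSeries
  simpa only [mul_div_assoc, mul_assoc] using (summable_logSeries κ hc u).hasSum.div_const (u : ℂ)

lemma hasSum_shifted_logMode_div (hc : Summable fun n : ℤ => ‖(n : ℂ) * c n‖) {C : ℤ → ℂ} {b v : ℝ}
    (hb : b ≠ 0) (hv : v ≠ 0) (hC : ∀ n, C n = c n * logMode κ n b) :
    HasSum (fun n : ℤ => n * (C n * logMode κ n v / v)) (logSeries κ c (b * v) / v) := by
  unfold logSeries
  simpa only [hC, logMode_mul κ _ hb hv, mul_div_assoc, mul_assoc] using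
    (summable_logSeries κ hc (b * v)).hasSum.div_const (v : ℂ)

lemma ofReal_mul_waveProfile_mul (hconj : ∀ n, c (-n) = conj (c n)) {b : ℝ} (hb : b ≠ 0) (v : ℝ) :
    ((b * waveProfile κ c (b * v) : ℝ) : ℂ) = I * Real.pi * κ * (logSeries κ c (b * v) / v) := by
  have hb' : (b : ℂ) ≠ 0 := ofReal_ne_zero.mpr hb
  rw [ofReal_mul, ofReal_waveProfile κ hconj, ofReal_mul]
  field_simp

lemma tsum_dAlembert_add (hc : Summable fun n : ℤ => ‖(n : ℂ) * c n‖)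
    (hconj : ∀ n, c (-n) = conj (c n)) {C : ℤ → ℂ} {b v : ℝ} (hb : b ≠ 0) (hv : v ≠ 0)
    (hC : ∀ n, C n = c n * logMode κ n b) (u : ℝ) :
    I * Real.pi * κ * ∑' n : ℤ, (n : ℂ) * (c n * logMode κ n u / u + C n * logMode κ n v / v) =
      ((waveProfile κ c u + b * waveProfile κ c (b * v) : ℝ) : ℂ) := by
  simp only [mul_add]
  rw [((hasSum_logMode_div κ hc u).add (hasSum_shifted_logMode_div κ hc hb hv hC)).tsum_eq,
    ofReal_add, ofReal_waveProfile κ hconj, ofReal_mul_waveProfile_mul κ hconj hb]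
  ring

lemma tsum_dAlembert_sub (hc : Summable fun n : ℤ => ‖(n : ℂ) * c n‖)
    (hconj : ∀ n, c (-n) = conj (c n)) {C : ℤ → ℂ} {b v : ℝ} (hb : b ≠ 0) (hv : v ≠ 0)
    (hC : ∀ n, C n = c n * logMode κ n b) (u : ℝ) :
    I * Real.pi * κ * ∑' n : ℤ, (n : ℂ) * (c n * logMode κ n u / u - C n * logMode κ n v / v) =
      ((waveProfile κ c u - b * waveProfile κ c (b * v) : ℝ) : ℂ) := by
  simp only [mul_sub]
  rw [((hasSum_logMode_div κ hc u).sub (hasSum_shifted_logMode_div κ hc hb hv hC)).tsum_eq,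
    ofReal_sub, ofReal_waveProfile κ hconj, ofReal_mul_waveProfile_mul κ hconj hb]
  ring

end LogSeries

section Energy

variable {a : ℝ → ℝ}

lemma ContinuousOn.intervalIntegrable_sq_comp (ha : ContinuousOn a (Ioi 0)) {g : ℝ → ℝ}
    (hg : Continuous g) {p q : ℝ} (hpos : ∀ x ∈ uIcc p q, 0 < g x) :
    IntervalIntegrable (fun x => a (g x) ^ 2) volume p q :=
  ((ha.comp hg.continuousOn hpos).pow 2).intervalIntegrable

lemma integral_sq_le_integral_sq_of_le (ha : ContinuousOn a (Ioi 0)) {p q r : ℝ} (hp : 0 < p)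
    (hpq : p ≤ q) (hqr : q ≤ r) : ∫ u in p..q, a u ^ 2 ≤ ∫ u in p..r, a u ^ 2 :=
  intervalIntegral.integral_mono_interval le_rfl hpq hqr (.of_forall fun _ => sq_nonneg _)
    (ha.intervalIntegrable_sq_comp continuous_id fun x hx => by
      rw [uIcc_of_le (hpq.trans hqr)] at hx
      exact hp.trans_le hx.1)

lemma integral_energy_dAlembert (ha : ContinuousOn a (Ioi 0)) {b t p q : ℝ} (hb : 0 < b)
    (hpq : p ≤ q) (hp : 0 < t + p) (hq : 0 < t - q) :
    (1 / 2) * ∫ x in Ioo p q,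
        ((a (t + x) + b * a (b * (t - x))) ^ 2 + (a (t + x) - b * a (b * (t - x))) ^ 2) =
      (∫ u in t + p..t + q, a u ^ 2) + b * ∫ u in b * t - b * q..b * t - b * p, a u ^ 2 := by
  have hpos : ∀ x ∈ uIcc p q, 0 < t + x ∧ 0 < b * t - b * x := fun x hx => by
    rw [uIcc_of_le hpq] at hx
    exact ⟨by linarith [hx.1], by nlinarith [hx.2]⟩
  have h₁ := ha.intervalIntegrable_sq_comp (g := fun x => t + x) (by fun_prop) fun x hx =>
    (hpos x hx).1
  have h₂ := (ha.intervalIntegrable_sq_comp (g := fun x => b * t - b * x) (by fun_prop)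
    fun x hx => (hpos x hx).2).const_mul (b ^ 2)
  have hdensity : ∀ x, (a (t + x) + b * a (b * (t - x))) ^ 2 + (a (t + x) - b * a (b * (t - x))) ^ 2
      = 2 * (a (t + x) ^ 2 + b ^ 2 * a (b * t - b * x) ^ 2) := fun x => by
    rw [mul_sub]; ring
  simp_rw [hdensity]
  rw [← integral_Ioc_eq_integral_Ioo, ← intervalIntegral.integral_of_le hpq,
    intervalIntegral.integral_const_mul, intervalIntegral.integral_add h₁ h₂,
    intervalIntegral.integral_const_mul, intervalIntegral.integral_comp_add_left (fun u => a u ^ 2),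
    intervalIntegral.integral_comp_sub_mul (fun u => a u ^ 2) hb.ne', smul_eq_mul]
  field_simp

lemma integral_Ioo_sq_add_sq_comp_mul (ha : ContinuousOn a (Ioi 0)) {k₁ k₂ s₁ s₂ t₀ t₁ : ℝ}
    (hs₁ : 0 < s₁) (hs₂ : 0 < s₂) (ht₀ : 0 < t₀) (ht : t₀ ≤ t₁) :
    ∫ t in Ioo t₀ t₁, ((k₁ * a (s₁ * t)) ^ 2 + (k₂ * a (s₂ * t)) ^ 2) =
      k₁ ^ 2 * (s₁⁻¹ * ∫ u in s₁ * t₀..s₁ * t₁, a u ^ 2) +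
        k₂ ^ 2 * (s₂⁻¹ * ∫ u in s₂ * t₀..s₂ * t₁, a u ^ 2) := by
  have hpos : ∀ {s}, 0 < s → ∀ t ∈ uIcc t₀ t₁, 0 < s * t := fun hs t htmem => by
    rw [uIcc_of_le ht] at htmem
    exact mul_pos hs (ht₀.trans_le htmem.1)
  simp_rw [mul_pow]
  rw [← integral_Ioc_eq_integral_Ioo, ← intervalIntegral.integral_of_le ht,
    intervalIntegral.integral_add
      ((ha.intervalIntegrable_sq_comp (g := fun t => s₁ * t) (by fun_prop) (hpos hs₁)).const_mul _)
      ((ha.intervalIntegrable_sq_comp (g := fun t => s₂ * t) (by fun_prop) (hpos hs₂)).const_mul _),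
    intervalIntegral.integral_const_mul, intervalIntegral.integral_const_mul,
    intervalIntegral.integral_comp_mul_left (fun u => a u ^ 2) hs₁.ne',
    intervalIntegral.integral_comp_mul_left (fun u => a u ^ 2) hs₂.ne', smul_eq_mul, smul_eq_mul]

end Energy

lemma one_le_observability_const_mul_weight {ℓ ℓ' M : ℝ} (hℓ : 0 ≤ ℓ) (hℓ1 : ℓ < 1)
    (hℓ' : 0 ≤ ℓ') (hℓ'1 : ℓ' < 1) (hM1 : 1 ≤ M) (hM : (1 + ℓ) / (1 - ℓ') ≤ M) :
    1 ≤ (1 - min ℓ ℓ' ^ 2) ^ 2 * M / (4 * (1 - max ℓ ℓ')) * ((2 / (1 + ℓ)) ^ 2 * (1 - ℓ)⁻¹) := by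
  have hmax : 0 < 1 - max ℓ ℓ' := sub_pos.mpr (max_lt hℓ1 hℓ'1)
  have hℓ2 : 0 < 1 - ℓ ^ 2 := by nlinarith
  rw [div_le_iff₀ (by linarith)] at hM
  rw [show (1 - min ℓ ℓ' ^ 2) ^ 2 * M / (4 * (1 - max ℓ ℓ')) * ((2 / (1 + ℓ)) ^ 2 * (1 - ℓ)⁻¹) =
      (1 - min ℓ ℓ' ^ 2) ^ 2 * M / ((1 - max ℓ ℓ') * ((1 - ℓ ^ 2) * (1 + ℓ))) by
    field_simp [show (1 - ℓ) ≠ 0 by linarith, show (1 + ℓ) ≠ 0 by linarith]; ring,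
    one_le_div (by positivity)]
  rcases le_total ℓ ℓ' with h | h
  · rw [max_eq_right h, min_eq_left h]
    have hsq : (1 - ℓ') ^ 2 ≤ 1 - ℓ ^ 2 := by nlinarith
    nlinarith [mul_le_mul_of_nonneg_left hsq (by positivity : 0 ≤ (1 - ℓ ^ 2) * (1 + ℓ)),
      mul_le_mul_of_nonneg_left hM (by positivity : 0 ≤ (1 - ℓ ^ 2) ^ 2)]
  · rw [max_eq_left h, min_eq_right h]
    have hsq : (1 - ℓ ^ 2) ^ 2 ≤ (1 - ℓ' ^ 2) ^ 2 := by gcongr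
    nlinarith [mul_le_mul_of_nonneg_left hM1 (sq_nonneg (1 - ℓ' ^ 2))]

section Traces

variable {a : ℝ → ℝ}

lemma dAlembert_trace_left {b ρ ℓ : ℝ} (hscale : ∀ u, a (ρ * u) = a u / ρ) (hρ : ρ ≠ 0)
    (hℓ : 1 + ℓ ≠ 0) (hbρ : b * (1 + ℓ) = ρ * (1 - ℓ)) (t : ℝ) :
    a (t + -ℓ * t) + b * a (b * (t - -ℓ * t)) = 2 / (1 + ℓ) * a ((1 - ℓ) * t) := by
  rw [show b * (t - -ℓ * t) = ρ * ((1 - ℓ) * t) by linear_combination t * hbρ, hscale,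
    show t + -ℓ * t = (1 - ℓ) * t by ring]
  field_simp
  linear_combination a ((1 - ℓ) * t) * hbρ

lemma dAlembert_trace_right {b ℓ : ℝ} (hℓ : 1 - ℓ ≠ 0) (hb : b * (1 - ℓ) = 1 + ℓ) (t : ℝ) :
    a (t + ℓ * t) + b * a (b * (t - ℓ * t)) = 2 / (1 - ℓ) * a ((1 + ℓ) * t) := by
  rw [show b * (t - ℓ * t) = (1 + ℓ) * t by linear_combination t * hb,
    show t + ℓ * t = (1 + ℓ) * t by ring]
  field_simp
  linear_combination a ((1 + ℓ) * t) * hb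

end Traces

theorem observability_of_dAlembert_profile {a : ℝ → ℝ} (ha : ContinuousOn a (Ioi 0))
    {ℓ₁ ℓ₂ b M t₀ T : ℝ} (hℓ₁ : 0 ≤ ℓ₁) (hℓ₁' : ℓ₁ < 1) (hℓ₂ : 0 ≤ ℓ₂) (hℓ₂' : ℓ₂ < 1)
    (hb : b * (1 - ℓ₂) = 1 + ℓ₂) (hMα : (1 + ℓ₁) / (1 - ℓ₂) ≤ M)
    (hMβ : (1 + ℓ₂) / (1 - ℓ₁) ≤ M) (ht₀ : 0 < t₀) (hT : (M - 1) * t₀ ≤ T) :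
    (1 / 2) * ∫ x in Ioo (-ℓ₁ * t₀) (ℓ₂ * t₀),
        ((a (t₀ + x) + b * a (b * (t₀ - x))) ^ 2 + (a (t₀ + x) - b * a (b * (t₀ - x))) ^ 2) ≤
      (1 - min ℓ₁ ℓ₂ ^ 2) ^ 2 * M / (4 * (1 - max ℓ₁ ℓ₂)) *
        ∫ t in Ioo t₀ (t₀ + T),
          ((2 / (1 + ℓ₁) * a ((1 - ℓ₁) * t)) ^ 2 + (2 / (1 - ℓ₂) * a ((1 + ℓ₂) * t)) ^ 2) := by
  have hMα' : 1 + ℓ₁ ≤ M * (1 - ℓ₂) := (div_le_iff₀ (by linarith)).mp hMα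
  have hMβ' : 1 + ℓ₂ ≤ M * (1 - ℓ₁) := (div_le_iff₀ (by linarith)).mp hMβ
  have hb₀ : 0 < b := by nlinarith
  have hM₁ : 1 ≤ M := by nlinarith
  have hT₀ : 0 ≤ T := le_trans (by nlinarith) hT
  rw [integral_energy_dAlembert ha hb₀ (by nlinarith) (by nlinarith) (by nlinarith),
    integral_Ioo_sq_add_sq_comp_mul ha (by linarith) (by linarith) ht₀ (by linarith)]
  set K := (1 - min ℓ₁ ℓ₂ ^ 2) ^ 2 * M / (4 * (1 - max ℓ₁ ℓ₂))
  set I₁ := ∫ u in (1 - ℓ₁) * t₀..(1 - ℓ₁) * (t₀ + T), a u ^ 2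
  set I₂ := ∫ u in (1 + ℓ₂) * t₀..(1 + ℓ₂) * (t₀ + T), a u ^ 2
  have hJ₁ : ∫ u in t₀ + -ℓ₁ * t₀..t₀ + ℓ₂ * t₀, a u ^ 2 ≤ I₁ := by
    rw [show t₀ + -ℓ₁ * t₀ = (1 - ℓ₁) * t₀ by ring]
    exact integral_sq_le_integral_sq_of_le ha (by nlinarith) (by nlinarith) (by nlinarith)
  have hJ₂ : ∫ u in b * t₀ - b * (ℓ₂ * t₀)..b * t₀ - b * (-ℓ₁ * t₀), a u ^ 2 ≤ I₂ := by
    have hbβ : 1 + ℓ₂ ≤ b * (1 + ℓ₁) := by nlinarith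
    have hbα : b * (1 + ℓ₁) ≤ M * (1 + ℓ₂) := by nlinarith
    rw [show b * t₀ - b * (ℓ₂ * t₀) = (1 + ℓ₂) * t₀ by linear_combination t₀ * hb,
      show b * t₀ - b * (-ℓ₁ * t₀) = b * (1 + ℓ₁) * t₀ by ring]
    exact integral_sq_le_integral_sq_of_le ha (by positivity)
      (mul_le_mul_of_nonneg_right hbβ ht₀.le) (by nlinarith [mul_le_mul_of_nonneg_right hbα ht₀.le])
  have hI₁ : 0 ≤ I₁ := intervalIntegral.integral_nonneg (by nlinarith) fun _ _ => sq_nonneg _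
  have hI₂ : 0 ≤ I₂ := intervalIntegral.integral_nonneg (by nlinarith) fun _ _ => sq_nonneg _
  have hc₁ := one_le_observability_const_mul_weight hℓ₁ hℓ₁' hℓ₂ hℓ₂' hM₁ hMα
  have hc₂ := one_le_observability_const_mul_weight hℓ₂ hℓ₂' hℓ₁ hℓ₁' hM₁ hMβ
  rw [min_comm, max_comm] at hc₂
  have hweight : (2 / (1 - ℓ₂)) ^ 2 * (1 + ℓ₂)⁻¹ = b * ((2 / (1 + ℓ₂)) ^ 2 * (1 - ℓ₂)⁻¹) := by
    rw [eq_div_of_mul_eq (by linarith) hb]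
    field_simp
  calc _ ≤ 1 * I₁ + b * (1 * I₂) := by gcongr <;> linarith
    _ ≤ K * ((2 / (1 + ℓ₁)) ^ 2 * (1 - ℓ₁)⁻¹) * I₁ +
          b * (K * ((2 / (1 + ℓ₂)) ^ 2 * (1 - ℓ₂)⁻¹) * I₂) := by gcongr
    _ = _ := by linear_combination (-K * I₂) * hweight

theorem observability_of_dAlembert {a : ℝ → ℝ} {Φx Φt : ℝ → ℝ → ℝ}
    (ha : ContinuousOn a (Ioi 0)) {ℓ₁ ℓ₂ b ρ M t₀ T : ℝ}
    (hℓ₁ : 0 ≤ ℓ₁) (hℓ₁' : ℓ₁ < 1) (hℓ₂ : 0 ≤ ℓ₂) (hℓ₂' : ℓ₂ < 1)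
    (hb : b * (1 - ℓ₂) = 1 + ℓ₂) (hbρ : b * (1 + ℓ₁) = ρ * (1 - ℓ₁)) (hρ : ρ ≠ 0)
    (hscale : ∀ u, a (ρ * u) = a u / ρ) (hMα : (1 + ℓ₁) / (1 - ℓ₂) ≤ M)
    (hMβ : (1 + ℓ₂) / (1 - ℓ₁) ≤ M) (ht₀ : 0 < t₀) (hT : (M - 1) * t₀ ≤ T)
    (hΦx : ∀ t, t₀ ≤ t → ∀ x, -ℓ₁ * t ≤ x → x ≤ ℓ₂ * t →
      Φx x t = a (t + x) + b * a (b * (t - x)))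
    (hΦt : ∀ x ∈ Ioo (-ℓ₁ * t₀) (ℓ₂ * t₀), Φt x t₀ = a (t₀ + x) - b * a (b * (t₀ - x))) :
    (1 / 2) * ∫ x in Ioo (-ℓ₁ * t₀) (ℓ₂ * t₀), (Φx x t₀ ^ 2 + Φt x t₀ ^ 2) ≤
      (1 - min ℓ₁ ℓ₂ ^ 2) ^ 2 * M / (4 * (1 - max ℓ₁ ℓ₂)) *
        ∫ t in Ioo t₀ (t₀ + T), (Φx (-ℓ₁ * t) t ^ 2 + Φx (ℓ₂ * t) t ^ 2) := by
  have htrace : ∀ t ∈ Ioo t₀ (t₀ + T), Φx (-ℓ₁ * t) t ^ 2 + Φx (ℓ₂ * t) t ^ 2 =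
      (2 / (1 + ℓ₁) * a ((1 - ℓ₁) * t)) ^ 2 + (2 / (1 - ℓ₂) * a ((1 + ℓ₂) * t)) ^ 2 :=
    fun t ht => by
      have ht₀t : t₀ ≤ t := ht.1.le
      rw [hΦx t ht₀t _ le_rfl (by nlinarith), hΦx t ht₀t _ (by nlinarith) le_rfl,
        dAlembert_trace_left hscale hρ (by linarith) hbρ, dAlembert_trace_right (by linarith) hb]
  rw [setIntegral_congr_fun measurableSet_Ioo fun x hx => by
      rw [hΦx t₀ le_rfl x hx.1.le hx.2.le, hΦt x hx],
    setIntegral_congr_fun measurableSet_Ioo htrace]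
  exact observability_of_dAlembert_profile ha hℓ₁ hℓ₁' hℓ₂ hℓ₂' hb hMα hMβ ht₀ hT

end

theorem observability_two_endpoints_general
    (ℓ₁ ℓ₂ L₀ t₀ α β κ : ℝ)
    (hℓ₁ : 0 ≤ ℓ₁) (hℓ₁' : ℓ₁ < 1) (hℓ₂ : 0 ≤ ℓ₂) (hℓ₂' : ℓ₂ < 1)
    (hℓ : 0 < ℓ₁ + ℓ₂) (hL₀ : 0 < L₀) (ht₀ : t₀ = L₀ / (ℓ₁ + ℓ₂))
    (hα : α = (1 + ℓ₁) / (1 - ℓ₂)) (hβ : β = (1 + ℓ₂) / (1 - ℓ₁))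
    (hκ : κ = 2 / Real.log (α * β))
    (l L : ℝ) (hl : l = min ℓ₁ ℓ₂) (hL : L = max ℓ₁ ℓ₂)
    (c : ℤ → ℂ)
    (hcsum : Summable fun n : ℤ => ‖(n : ℂ) * c n‖)
    (hconj : ∀ n : ℤ, c (-n) = (starRingEnd ℂ) (c n))
    (C : ℤ → ℂ)
    (hC : ∀ n : ℤ, C n = c n *
      Complex.exp (Complex.I * n * Real.pi * κ * Real.log ((1 + ℓ₂) / (1 - ℓ₂))))
    (Φx : ℝ → ℝ → ℝ)
    (hΦx : ∀ t : ℝ, t₀ ≤ t → ∀ x : ℝ, -ℓ₁ * t ≤ x → x ≤ ℓ₂ * t →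
      (Φx x t : ℂ) = Complex.I * Real.pi * κ * ∑' n : ℤ, (n : ℂ) *
        (c n * Complex.exp (Complex.I * n * Real.pi * κ * Real.log (t + x)) /
            ((t + x : ℝ) : ℂ) +
         C n * Complex.exp (Complex.I * n * Real.pi * κ * Real.log (t - x)) /
            ((t - x : ℝ) : ℂ)))
    (Φt : ℝ → ℝ → ℝ)
    (hΦt : ∀ t : ℝ, t₀ ≤ t → ∀ x : ℝ, -ℓ₁ * t ≤ x → x ≤ ℓ₂ * t →
      (Φt x t : ℂ) = Complex.I * Real.pi * κ * ∑' n : ℤ, (n : ℂ) *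
        (c n * Complex.exp (Complex.I * n * Real.pi * κ * Real.log (t + x)) /
            ((t + x : ℝ) : ℂ) -
         C n * Complex.exp (Complex.I * n * Real.pi * κ * Real.log (t - x)) /
            ((t - x : ℝ) : ℂ)))
    (E : ℝ → ℝ)
    (hE : ∀ t : ℝ, E t = (1 / 2) * ∫ x in Set.Ioo (-ℓ₁ * t) (ℓ₂ * t),
      ((Φx x t) ^ 2 + (Φt x t) ^ 2))
    :
    ∀ T : ℝ, (max α β - 1) * t₀ ≤ T →
      E t₀ ≤ (1 - l ^ 2) ^ 2 * max α β / (4 * (1 - L)) *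
        ∫ t in Set.Ioo t₀ (t₀ + T),
          ((Φx (-ℓ₁ * t) t) ^ 2 + (Φx (ℓ₂ * t) t) ^ 2) := by
  intro T hT
  subst hα hβ hl hL
  have h₁ : 0 < 1 - ℓ₁ := by linarith
  have h₂ : 0 < 1 - ℓ₂ := by linarith
  have ht₀pos : 0 < t₀ := ht₀ ▸ div_pos hL₀ hℓ
  set b := (1 + ℓ₂) / (1 - ℓ₂) with hb_def
  set ρ := (1 + ℓ₁) / (1 - ℓ₂) * ((1 + ℓ₂) / (1 - ℓ₁)) with hρ_def
  have hb₀ : b ≠ 0 := (div_pos (by linarith) h₂).ne'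
  have hρ : 1 < ρ := by
    rw [hρ_def, div_mul_div_comm, one_lt_div (mul_pos h₂ h₁)]
    nlinarith
  have hbρ : b * (1 + ℓ₁) = ρ * (1 - ℓ₁) := by
    rw [hb_def, hρ_def]
    field_simp
  rw [hE]
  refine observability_of_dAlembert ((continuousOn_waveProfile κ hcsum).mono fun _ hu => hu.ne')
    hℓ₁ hℓ₁' hℓ₂ hℓ₂' (div_mul_cancel₀ _ h₂.ne') hbρ
    (zero_lt_one.trans hρ).ne' (waveProfile_mul_of_mul_log_eq_two κ (hκ ▸ div_mul_cancel₀ 2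
      (Real.log_pos hρ).ne')) (le_max_left _ _) (le_max_right _ _) ht₀pos hT
    (fun t ht x hx₁ hx₂ => ?_) fun x hx => ?_
  · exact_mod_cast (hΦx t ht x hx₁ hx₂).trans
      (tsum_dAlembert_add κ hcsum hconj hb₀ (by nlinarith : 0 < t - x).ne' hC (t + x))
  · exact_mod_cast (hΦt t₀ le_rfl x hx.1.le hx.2.le).trans
      (tsum_dAlembert_sub κ hcsum hconj hb₀ (by nlinarith [hx.2] : 0 < t₀ - x).ne' hC (t₀ + x))

/-- observability at both endpoints in the sharp time
`T̃_ℓ = (max{α,β} − 1)·t₀`. -/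
theorem observability_two_endpoints
    (ℓ₁ ℓ₂ L₀ t₀ α β κ : ℝ)
    (hℓ₁ : 0 ≤ ℓ₁) (hℓ₁' : ℓ₁ < 1) (hℓ₂ : 0 ≤ ℓ₂) (hℓ₂' : ℓ₂ < 1)
    (hℓ : 0 < ℓ₁ + ℓ₂) (hL₀ : 0 < L₀) (ht₀ : t₀ = L₀ / (ℓ₁ + ℓ₂))
    (hα : α = (1 + ℓ₁) / (1 - ℓ₂)) (hβ : β = (1 + ℓ₂) / (1 - ℓ₁))
    (hκ : κ = 2 / Real.log (α * β))
    (l L : ℝ) (hl : l = min ℓ₁ ℓ₂) (hL : L = max ℓ₁ ℓ₂)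
    (c : ℤ → ℂ) (hc0 : c 0 = 0)
    (hcsum : Summable fun n : ℤ => ‖(n : ℂ) * c n‖)
    (hconj : ∀ n : ℤ, c (-n) = (starRingEnd ℂ) (c n))
    (C : ℤ → ℂ)
    (hC : ∀ n : ℤ, C n = c n *
      Complex.exp (Complex.I * n * Real.pi * κ * Real.log ((1 + ℓ₂) / (1 - ℓ₂))))
    (Φx : ℝ → ℝ → ℝ)
    (hΦx : ∀ t : ℝ, t₀ ≤ t → ∀ x : ℝ, -ℓ₁ * t ≤ x → x ≤ ℓ₂ * t →
      (Φx x t : ℂ) = Complex.I * Real.pi * κ * ∑' n : ℤ, (n : ℂ) *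
        (c n * Complex.exp (Complex.I * n * Real.pi * κ * Real.log (t + x)) /
            ((t + x : ℝ) : ℂ) +
         C n * Complex.exp (Complex.I * n * Real.pi * κ * Real.log (t - x)) /
            ((t - x : ℝ) : ℂ)))
    (Φt : ℝ → ℝ → ℝ)
    (hΦt : ∀ t : ℝ, t₀ ≤ t → ∀ x : ℝ, -ℓ₁ * t ≤ x → x ≤ ℓ₂ * t →
      (Φt x t : ℂ) = Complex.I * Real.pi * κ * ∑' n : ℤ, (n : ℂ) *
        (c n * Complex.exp (Complex.I * n * Real.pi * κ * Real.log (t + x)) /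
            ((t + x : ℝ) : ℂ) -
         C n * Complex.exp (Complex.I * n * Real.pi * κ * Real.log (t - x)) /
            ((t - x : ℝ) : ℂ)))
    (E : ℝ → ℝ)
    (hE : ∀ t : ℝ, E t = (1 / 2) * ∫ x in Set.Ioo (-ℓ₁ * t) (ℓ₂ * t),
      ((Φx x t) ^ 2 + (Φt x t) ^ 2))
    :
    ∀ T : ℝ, (max α β - 1) * t₀ ≤ T →
      E t₀ ≤ (1 - l ^ 2) ^ 2 * max α β / (4 * (1 - L)) *
        ∫ t in Set.Ioo t₀ (t₀ + T),
          ((Φx (-ℓ₁ * t) t) ^ 2 + (Φx (ℓ₂ * t) t) ^ 2) :=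
  observability_two_endpoints_general ℓ₁ ℓ₂ L₀ t₀ α β κ hℓ₁ hℓ₁' hℓ₂ hℓ₂' hℓ hL₀ ht₀ hα hβ hκ l L hl
    hL c hcsum hconj C hC Φx hΦx Φt hΦt E hE
end
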